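/- Let S, A be nonempty finite sets, p : S → A → PMF S, r : S → A → ℝ, and γ ∈ [0,1). The optimal Bellman operator T*, acting on V : S → ℝ by (T* V)(x) = max_a (r(x,a) + γ·∑_y p(y|x,a)·V(y)), is Lipschitz with constant γ with respect to the supremum norm; consequently there is a unique V* : S → ℝ satisfying the optimal Bellman equation V*(x) = max_a (r(x,a) + γ·∑_y p(y|x,a)·V*(y)) for all x. -/

import Mathlib

open scoped BigOperators

lemma pmf_sum_toReal {S : Type*} [Fintype S] (q : PMF S) :
    ∑ y : S, (q y).toReal = 1 := by
  have h1 : ∑ y : S, q y = 1 := by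
    have := q.tsum_coe; rwa [tsum_fintype] at this
  rw [← ENNReal.toReal_sum (fun y _ => (q.apply_ne_top y)), h1, ENNReal.toReal_one]

/-- The optimal Bellman operator `(T* V)(x) = max_a (r(x,a) + γ·E_p[V])` is
γ-Lipschitz in the sup norm, hence there is a unique solution of the optimal
Bellman equation. -/
theorem stmt_18 {S A : Type*} [Fintype S] [Nonempty S] [Fintype A] [Nonempty A]
    (p : S → A → PMF S) (r : S → A → ℝ) (γ : ℝ) (hγ0 : 0 ≤ γ) (hγ1 : γ < 1)
    (T : (S → ℝ) → S → ℝ)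
    (hT : ∀ V x, T V x = ⨆ a : A, (r x a + γ * ∑ y : S, (p x a y).toReal * V y)) :
    (∀ V₁ V₂ : S → ℝ, ‖T V₁ - T V₂‖ ≤ γ * ‖V₁ - V₂‖) ∧
    ∃! V : S → ℝ, T V = V := by
  have key : ∀ V₁ V₂ : S → ℝ, ‖T V₁ - T V₂‖ ≤ γ * ‖V₁ - V₂‖ := by
    -- first a one-sided bound
    have hside : ∀ (V₁ V₂ : S → ℝ) (x : S),
        T V₁ x - T V₂ x ≤ γ * ‖V₁ - V₂‖ := by
      intro V₁ V₂ x
      rw [hT, hT, sub_le_iff_le_add]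
      apply ciSup_le
      intro a
      have hba : BddAbove (Set.range fun a : A =>
          r x a + γ * ∑ y : S, (p x a y).toReal * V₂ y) :=
        Set.Finite.bddAbove (Set.finite_range _)
      have h1 : r x a + γ * ∑ y : S, (p x a y).toReal * V₂ y ≤
          ⨆ a : A, (r x a + γ * ∑ y : S, (p x a y).toReal * V₂ y) :=
        le_ciSup hba a
      have h2 : ∑ y : S, (p x a y).toReal * V₁ y -
          ∑ y : S, (p x a y).toReal * V₂ y ≤ ‖V₁ - V₂‖ := by
        rw [← Finset.sum_sub_distrib]
        calc ∑ y : S, ((p x a y).toReal * V₁ y - (p x a y).toReal * V₂ y)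
            = ∑ y : S, (p x a y).toReal * (V₁ y - V₂ y) := by
              simp [mul_sub]
          _ ≤ ∑ y : S, (p x a y).toReal * ‖V₁ - V₂‖ := by
              apply Finset.sum_le_sum
              intro y _
              apply mul_le_mul_of_nonneg_left _ ENNReal.toReal_nonneg
              calc V₁ y - V₂ y ≤ |V₁ y - V₂ y| := le_abs_self _
                _ = ‖(V₁ - V₂) y‖ := by simp [Real.norm_eq_abs]
                _ ≤ ‖V₁ - V₂‖ := norm_le_pi_norm _ y
          _ = ‖V₁ - V₂‖ := by
              rw [← Finset.sum_mul, pmf_sum_toReal (p x a), one_mul]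
      nlinarith [h1, h2]
    intro V₁ V₂
    rw [pi_norm_le_iff_of_nonneg (by positivity)]
    intro x
    rw [Real.norm_eq_abs, abs_le]
    constructor
    · have := hside V₂ V₁ x
      have hn : ‖V₂ - V₁‖ = ‖V₁ - V₂‖ := norm_sub_rev _ _
      simp only [Pi.sub_apply]
      linarith [hside V₂ V₁ x, hn ▸ hside V₂ V₁ x]
    · simpa using hside V₁ V₂ x
  refine ⟨key, ?_⟩
  set K : NNReal := ⟨γ, hγ0⟩ with hK
  have hlip : LipschitzWith K T := by
    apply LipschitzWith.of_dist_le_mul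
    intro V₁ V₂
    rw [dist_eq_norm, dist_eq_norm]
    exact key V₁ V₂
  have hc : ContractingWith K T := ⟨by exact_mod_cast hγ1, hlip⟩
  refine ⟨hc.fixedPoint T, hc.fixedPoint_isFixedPt, ?_⟩
  intro V hV
  exact hc.fixedPoint_unique hV
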